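/- Let G be a graph such that for every vertex v, G \ v is well-covered and α(G \ v) = α(G). Then G is a W₂ graph, i.e., every pair of disjoint independent sets of G is contained in a pair of disjoint independent sets each of size α(G). -/

import Mathlib

open Finset SimpleGraph
open scoped Classical

noncomputable section

/-- A finset of vertices is independent in `G`. -/
def IsIndep {V : Type*} (G : SimpleGraph V) (s : Finset V) : Prop :=
  ∀ u ∈ s, ∀ v ∈ s, ¬ G.Adj u v

/-- The independence number of a finite graph. -/
def indepNumF {V : Type*} [Fintype V] (G : SimpleGraph V) : ℕ :=
  (Finset.univ.filter fun s : Finset V => IsIndep G s).sup Finset.card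

/-- The independence polynomial of a finite graph, evaluated at `x`. -/
def indepPoly {V : Type*} [Fintype V] (G : SimpleGraph V) (x : ℚ) : ℚ :=
  ∑ s ∈ Finset.univ.filter (fun s : Finset V => IsIndep G s), x ^ s.card

/-- The cycle graph on `ZMod n`. -/
def cycleG (n : ℕ) : SimpleGraph (ZMod n) :=
  SimpleGraph.fromRel (fun u v => u - v = 1)

/-- The closed neighborhood of a finset of vertices. -/
def closedNbhdF {V : Type*} (G : SimpleGraph V) (F : Finset V) : Set V :=
  ↑F ∪ {v | ∃ u ∈ F, G.Adj u v}

/-- `G` is a W₂ graph. -/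
def IsW2 {V : Type*} [Fintype V] (G : SimpleGraph V) : Prop :=
  2 ≤ Fintype.card V ∧
  ∀ A B : Finset V, IsIndep G A → IsIndep G B → Disjoint A B →
    ∃ A₀ B₀ : Finset V, IsIndep G A₀ ∧ IsIndep G B₀ ∧ A ⊆ A₀ ∧ B ⊆ B₀ ∧
      Disjoint A₀ B₀ ∧ A₀.card = indepNumF G ∧ B₀.card = indepNumF G

/-- A maximal independent set. -/
def IsMaxIndep {V : Type*} (G : SimpleGraph V) (s : Finset V) : Prop :=
  IsIndep G s ∧ ∀ v ∉ s, ¬ IsIndep G (insert v s)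

/-- `G` is well-covered: all maximal independent sets have size `indepNum G`. -/
def WellCovered {V : Type*} [Fintype V] (G : SimpleGraph V) : Prop :=
  ∀ s : Finset V, IsMaxIndep G s → s.card = indepNumF G

/-!
Deleting a vertex `v` leaves a well-covered graph with the same independence number `α`, so every
independent set avoiding `v` extends to an independent set of size `α` avoiding `v`. Hence if `A`,
`B` are independent and `|B| < α`, some vertex outside `A` can be added to `B`: otherwise, extending
`B` to a maximum independent set gives a vertex `a ∈ A` independent of `B`, and a maximum independent
set through `B` avoiding `a` would lie in `A ∪ B`, so `a` could be added to it. Grow `B` to size `α`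
keeping it disjoint from `A`, then grow `A` against the new `B`.
-/

section

variable {V : Type*} {G : SimpleGraph V}

theorem IsIndep.mono {s t : Finset V} (ht : IsIndep G t) (hst : s ⊆ t) : IsIndep G s :=
  fun u hu v hv => ht u (hst hu) v (hst hv)

theorem isIndep_insert {a : V} {s : Finset V} :
    IsIndep G (insert a s) ↔ IsIndep G s ∧ ∀ b ∈ s, ¬ G.Adj a b := by
  refine ⟨fun h => ⟨h.mono (subset_insert a s), fun b hb => h a (mem_insert_self a s) b
    (mem_insert_of_mem hb)⟩, fun ⟨hs, ha⟩ u hu v hv => ?_⟩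
  rcases mem_insert.1 hu with rfl | hus <;> rcases mem_insert.1 hv with rfl | hvs
  · exact G.irrefl
  · exact ha v hvs
  · exact fun huv => ha u hus huv.symm
  · exact hs u hus v hvs

theorem isIndep_map_subtype {S : Set V} {t : Finset S} :
    IsIndep G (t.map (Function.Embedding.subtype _)) ↔ IsIndep (G.induce S) t := by
  simp [IsIndep]

theorem IsIndep.card_le_indepNumF [Fintype V] {s : Finset V} (hs : IsIndep G s) :
    s.card ≤ indepNumF G :=
  le_sup (mem_filter.2 ⟨mem_univ s, hs⟩)

theorem IsIndep.exists_isMaxIndep_superset [Fintype V] {s : Finset V} (hs : IsIndep G s) :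
    ∃ t, s ⊆ t ∧ IsMaxIndep G t := by
  obtain ⟨t, ht, hmax⟩ := (univ.filter fun t => s ⊆ t ∧ IsIndep G t).exists_max_image card
    ⟨s, mem_filter.2 ⟨mem_univ s, subset_rfl, hs⟩⟩
  obtain ⟨-, hst, ht⟩ := mem_filter.1 ht
  refine ⟨t, hst, ht, fun v hv hvt => ?_⟩
  have := hmax _ (mem_filter.2 ⟨mem_univ _, hst.trans (subset_insert v t), hvt⟩)
  rw [card_insert_of_notMem hv] at this
  omega

theorem IsIndep.exists_superset_card_eq_indepNumF_of_wellCovered [Fintype V] {S : Set V}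
    [Fintype S] (hwc : WellCovered (G.induce S)) (hα : indepNumF (G.induce S) = indepNumF G)
    {B : Finset V} (hB : IsIndep G B) (hBS : ↑B ⊆ S) :
    ∃ M, B ⊆ M ∧ ↑M ⊆ S ∧ IsIndep G M ∧ M.card = indepNumF G := by
  have hB' : IsIndep (G.induce S) (B.subtype (· ∈ S)) := by
    rw [← isIndep_map_subtype, subtype_map]
    exact hB.mono (filter_subset _ B)
  obtain ⟨t, hBt, ht⟩ := hB'.exists_isMaxIndep_superset
  refine ⟨t.map (Function.Embedding.subtype _), ?_, map_subtype_subset t,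
    isIndep_map_subtype.2 ht.1, by rw [card_map, hwc t ht, hα]⟩
  rw [← subtype_map_of_mem fun x hx => hBS hx]
  exact map_subset_map.2 hBt

variable [Fintype V] (h : ∀ v : V, WellCovered (G.induce ({v}ᶜ : Set V)) ∧
    indepNumF (G.induce ({v}ᶜ : Set V)) = indepNumF G)
include h

theorem IsIndep.exists_superset_card_eq_indepNumF_notMem {B : Finset V} (hB : IsIndep G B)
    {v : V} (hv : v ∉ B) : ∃ M, B ⊆ M ∧ v ∉ M ∧ IsIndep G M ∧ M.card = indepNumF G := by
  obtain ⟨M, hBM, hMv, hM, hMcard⟩ :=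
    hB.exists_superset_card_eq_indepNumF_of_wellCovered (h v).1 (h v).2
      (fun x hx (hxv : x = v) => hv (hxv ▸ hx))
  exact ⟨M, hBM, fun hvM => hMv hvM rfl, hM, hMcard⟩

theorem IsIndep.exists_isIndep_insert_of_card_lt {A B : Finset V} (hA : IsIndep G A)
    (hB : IsIndep G B) (hlt : B.card < indepNumF G) :
    ∃ x, x ∉ A ∧ x ∉ B ∧ IsIndep G (insert x B) := by
  have hα : indepNumF G ≤ (univ : Finset V).card := Finset.sup_le fun s _ => card_le_univ s
  obtain ⟨v, -, hv⟩ := exists_mem_notMem_of_card_lt_card (hlt.trans_le hα)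
  obtain ⟨M₁, hBM₁, -, hM₁, hM₁card⟩ := hB.exists_superset_card_eq_indepNumF_notMem h hv
  obtain ⟨a, haM₁, haB⟩ := exists_mem_notMem_of_card_lt_card (hM₁card ▸ hlt)
  have haB_indep : IsIndep G (insert a B) := hM₁.mono (insert_subset haM₁ hBM₁)
  by_cases haA : a ∈ A
  case neg => exact ⟨a, haA, haB, haB_indep⟩
  obtain ⟨M₂, hBM₂, haM₂, hM₂, hM₂card⟩ := hB.exists_superset_card_eq_indepNumF_notMem h haB
  obtain ⟨u, huM₂, huAB⟩ : ∃ u ∈ M₂, u ∉ A ∪ B := by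
    by_contra! hsub
    have hins : IsIndep G (insert a M₂) := isIndep_insert.2 ⟨hM₂, fun u hu =>
      (mem_union.1 (hsub u hu)).elim (hA a haA u)
        ((isIndep_insert.1 haB_indep).2 u)⟩
    have := hins.card_le_indepNumF
    rw [card_insert_of_notMem haM₂] at this
    omega
  rw [mem_union, not_or] at huAB
  exact ⟨u, huAB.1, huAB.2, hM₂.mono (insert_subset huM₂ hBM₂)⟩

theorem IsIndep.exists_disjoint_superset_card_eq_indepNumF {A B : Finset V} (hA : IsIndep G A)
    (hB : IsIndep G B) (hAB : Disjoint A B) :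
    ∃ B₀, B ⊆ B₀ ∧ IsIndep G B₀ ∧ Disjoint A B₀ ∧ B₀.card = indepNumF G := by
  by_cases hlt : B.card < indepNumF G
  · obtain ⟨x, hxA, hxB, hxB_indep⟩ := hA.exists_isIndep_insert_of_card_lt h hB hlt
    have : indepNumF G - (insert x B).card < indepNumF G - B.card := by
      rw [card_insert_of_notMem hxB]
      omega
    obtain ⟨B₀, hxBB₀, hB₀⟩ := hA.exists_disjoint_superset_card_eq_indepNumF hxB_indep
      (disjoint_insert_right.2 ⟨hxA, hAB⟩)
    exact ⟨B₀, (subset_insert x B).trans hxBB₀, hB₀⟩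
  · exact ⟨B, subset_rfl, hB, hAB, le_antisymm hB.card_le_indepNumF (not_lt.1 hlt)⟩
termination_by indepNumF G - B.card

end

/-- Staples criterion: if for every vertex `v` the graph `G \ v` is
well-covered with `α(G \ v) = α(G)`, then `G` is W₂: every pair of disjoint independent
sets of `G` extends to a pair of disjoint independent sets each of size `α(G)`. -/
theorem stmt_11 {V : Type*} [Fintype V] (G : SimpleGraph V)
    (h : ∀ v : V, WellCovered (G.induce ({v}ᶜ : Set V)) ∧
      indepNumF (G.induce ({v}ᶜ : Set V)) = indepNumF G) :
    ∀ A B : Finset V, IsIndep G A → IsIndep G B → Disjoint A B →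
      ∃ A₀ B₀ : Finset V, IsIndep G A₀ ∧ IsIndep G B₀ ∧ A ⊆ A₀ ∧ B ⊆ B₀ ∧
        Disjoint A₀ B₀ ∧ A₀.card = indepNumF G ∧ B₀.card = indepNumF G := by
  intro A B hA hB hAB
  obtain ⟨B₀, hBB₀, hB₀, hAB₀, hB₀card⟩ := hA.exists_disjoint_superset_card_eq_indepNumF h hB hAB
  obtain ⟨A₀, hAA₀, hA₀, hB₀A₀, hA₀card⟩ :=
    hB₀.exists_disjoint_superset_card_eq_indepNumF h hA hAB₀.symm
  exact ⟨A₀, B₀, hA₀, hB₀, hAA₀, hBB₀, hB₀A₀.symm, hA₀card, hB₀card⟩
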